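/- If the tuple (Ē, Ā, B̄, C̄; K̄) has no selective strong structural fixed modes, then (Ē, Ā, B̄) is selectively strongly structurally controllable (SSSC) and (Ē, Ā, C̄) is selectively strongly structurally observable (SSSO). -/

import Mathlib

inductive Pat : Type
  | zero : Pat
  | cross : Pat
  | any : Pat
deriving DecidableEq

/-- `X` is a realization of the selective structural pattern `Xbar`:
zero entries are zero, cross entries are nonzero, `any` entries are arbitrary. -/
def IsRealization {α β F : Type*} [Zero F]
    (Xbar : Matrix α β Pat) (X : Matrix α β F) : Prop :=
  ∀ i j, (Xbar i j = Pat.zero → X i j = 0) ∧ (Xbar i j = Pat.cross → X i j ≠ 0)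

/-- The complexification of a real matrix. -/
noncomputable def toC {α β : Type*} (X : Matrix α β ℝ) : Matrix α β ℂ :=
  X.map Complex.ofReal

/-- The pencil `A - λ E` is regular, i.e. `det (A - λ E)` is not identically zero. -/
def RegularPencil {n : ℕ} (E A : Matrix (Fin n) (Fin n) ℝ) : Prop :=
  ∃ μ : ℂ, (toC A - μ • toC E).det ≠ 0

/-- Selective strong structural controllability. -/
def SSSC {n : ℕ} {p : Type*} [Fintype p]
    (Ebar Abar : Matrix (Fin n) (Fin n) Pat) (Bbar : Matrix (Fin n) p Pat) : Prop :=
  ∀ (E A : Matrix (Fin n) (Fin n) ℝ) (B : Matrix (Fin n) p ℝ),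
    IsRealization Ebar E → IsRealization Abar A → RegularPencil E A →
    IsRealization Bbar B →
    ∀ lam : ℂ, (Matrix.fromCols (toC A - lam • toC E) (toC B)).rank = n

/-- Selective strong structural observability. -/
def SSSO {n : ℕ} {m : Type*} [Fintype m]
    (Ebar Abar : Matrix (Fin n) (Fin n) Pat) (Cbar : Matrix m (Fin n) Pat) : Prop :=
  ∀ (E A : Matrix (Fin n) (Fin n) ℝ) (C : Matrix m (Fin n) ℝ),
    IsRealization Ebar E → IsRealization Abar A → RegularPencil E A →
    IsRealization Cbar C →
    ∀ lam : ℂ, (Matrix.fromRows (toC A - lam • toC E) (toC C)).rank = n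

/-- A pattern with no `⊗` entries, i.e. a `{0,×}`-pattern. -/
def ZeroCross {α β : Type*} (X : Matrix α β Pat) : Prop :=
  ∀ i j, X i j ≠ Pat.any

/-- Number of `×` entries of a pattern. -/
def crossCount {α β : Type*} [Fintype α] [Fintype β] (X : Matrix α β Pat) : ℕ :=
  ∑ i, ∑ j, if X i j = Pat.cross then 1 else 0

/-- The pattern `Ā - λ Ē`. -/
def patLam {n : ℕ} (Ebar Abar : Matrix (Fin n) (Fin n) Pat) :
    Matrix (Fin n) (Fin n) Pat :=
  Matrix.of fun i j =>
    match Abar i j, Ebar i j with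
    | Pat.cross, Pat.zero => Pat.cross
    | Pat.zero, Pat.zero => Pat.zero
    | _, _ => Pat.any


/-- A real gain matrix respecting the information pattern `Kbar`. -/
def GainRespects {p m : Type*} (Kbar : Matrix p m Pat) (K : Matrix p m ℝ) : Prop :=
  ∀ i j, Kbar i j = Pat.zero → K i j = 0

/-- `lam` is a selective strong structural fixed mode of `(Ē, Ā, B̄, C̄; K̄)`. -/
def IsSSSFM {n : ℕ} {p m : Type*} [Fintype p] [Fintype m]
    (Ebar Abar : Matrix (Fin n) (Fin n) Pat) (Bbar : Matrix (Fin n) p Pat)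
    (Cbar : Matrix m (Fin n) Pat) (Kbar : Matrix p m Pat) (lam : ℂ) : Prop :=
  ∃ (E A : Matrix (Fin n) (Fin n) ℝ) (B : Matrix (Fin n) p ℝ) (C : Matrix m (Fin n) ℝ),
    IsRealization Ebar E ∧ IsRealization Abar A ∧ RegularPencil E A ∧
    IsRealization Bbar B ∧ IsRealization Cbar C ∧
    ∀ K : Matrix p m ℝ, GainRespects Kbar K →
      (lam • toC E - toC A - toC (B * K * C)).rank < n

/-- `(Ē, Ā, B̄, C̄; K̄)` has a selective strong structural fixed mode. -/
def HasSSSFM {n : ℕ} {p m : Type*} [Fintype p] [Fintype m]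
    (Ebar Abar : Matrix (Fin n) (Fin n) Pat) (Bbar : Matrix (Fin n) p Pat)
    (Cbar : Matrix m (Fin n) Pat) (Kbar : Matrix p m Pat) : Prop :=
  ∃ lam : ℂ, IsSSSFM Ebar Abar Bbar Cbar Kbar lam


/-
A rank defect of `[A - λE  B]` is a left null vector `v` of both `A - λE` and `B`; it stays
a left null vector of `λE - A - BKC` for every gain `K` and every `C`, so `λ` is a fixed mode.
Dually, a rank defect of `[A - λE; C]` is a right null vector killing every closed loop.
-/

namespace Matrix

section Field

variable {K : Type*} [Field K] {l m n : Type*} [Fintype n]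

theorem rank_lt_card_width_iff_exists_mulVec_eq_zero (M : Matrix m n K) :
    M.rank < Fintype.card n ↔ ∃ v, v ≠ 0 ∧ M *ᵥ v = 0 := by
  have hrank := M.mulVecLin.finrank_range_add_finrank_ker
  rw [Module.finrank_fintype_fun_eq_card] at hrank
  have hdefect : M.rank < Fintype.card n ↔ Module.finrank K (LinearMap.ker M.mulVecLin) ≠ 0 := by
    rw [rank]
    omega
  rw [hdefect, Ne, Submodule.finrank_eq_zero, ← Ne, Submodule.ne_bot_iff]
  simp only [LinearMap.mem_ker, mulVecLin_apply, and_comm]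

theorem rank_lt_card_height_iff_exists_vecMul_eq_zero [Fintype m] (M : Matrix m n K) :
    M.rank < Fintype.card m ↔ ∃ v, v ≠ 0 ∧ v ᵥ* M = 0 := by
  rw [← rank_transpose, rank_lt_card_width_iff_exists_mulVec_eq_zero]
  simp only [mulVec_transpose]

theorem exists_vecMul_fromCols_eq_zero_of_rank_ne [Fintype m] [Fintype l] (M : Matrix m n K)
    (N : Matrix m l K) (h : (fromCols M N).rank ≠ Fintype.card m) :
    ∃ v, v ≠ 0 ∧ v ᵥ* M = 0 ∧ v ᵥ* N = 0 := by
  obtain ⟨v, hv, hMN⟩ := (rank_lt_card_height_iff_exists_vecMul_eq_zero _).mp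
    ((rank_le_card_height _).lt_of_ne h)
  rw [vecMul_fromCols, ← Sum.elim_zero_zero, Sum.elim_eq_iff] at hMN
  exact ⟨v, hv, hMN⟩

theorem exists_fromRows_mulVec_eq_zero_of_rank_ne (M : Matrix m n K) (N : Matrix l n K)
    (h : (fromRows M N).rank ≠ Fintype.card n) :
    ∃ v, v ≠ 0 ∧ M *ᵥ v = 0 ∧ N *ᵥ v = 0 := by
  obtain ⟨v, hv, hMN⟩ := (rank_lt_card_width_iff_exists_mulVec_eq_zero _).mp
    ((rank_le_card_width _).lt_of_ne h)
  rw [fromRows_mulVec, ← Sum.elim_zero_zero, Sum.elim_eq_iff] at hMN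
  exact ⟨v, hv, hMN⟩

end Field

section CommRing

variable {R : Type*} [CommRing R] {m n : Type*} [Fintype n] {E A : Matrix n n R} {lam : R}
  {v : n → R}

theorem vecMul_smul_sub_sub_mul_eq_zero [Fintype m] {B : Matrix n m R}
    (hAE : v ᵥ* (A - lam • E) = 0) (hB : v ᵥ* B = 0) (G : Matrix m n R) :
    v ᵥ* (lam • E - A - B * G) = 0 := by
  rw [← neg_sub A, vecMul_sub, vecMul_neg, hAE, ← vecMul_vecMul, hB, zero_vecMul, neg_zero,
    sub_zero]

theorem smul_sub_sub_mul_mulVec_eq_zero [Fintype m] {C : Matrix m n R}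
    (hAE : (A - lam • E) *ᵥ v = 0) (hC : C *ᵥ v = 0) (G : Matrix n m R) :
    (lam • E - A - G * C) *ᵥ v = 0 := by
  rw [← neg_sub A, sub_mulVec, neg_mulVec, hAE, ← mulVec_mulVec, hC, mulVec_zero, neg_zero,
    sub_zero]

end CommRing

end Matrix

open Matrix

theorem exists_isRealization {α β F : Type*} [Zero F] [One F] [NeZero (1 : F)]
    (Xbar : Matrix α β Pat) : ∃ X : Matrix α β F, IsRealization Xbar X :=
  ⟨of fun i j => if Xbar i j = Pat.cross then 1 else 0,
    fun i j => ⟨fun h => by simp [h], fun h => by simp [h]⟩⟩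

theorem toC_mul {α β γ : Type*} [Fintype β] (X : Matrix α β ℝ) (Y : Matrix β γ ℝ) :
    toC (X * Y) = toC X * toC Y :=
  Matrix.map_mul (f := Complex.ofRealHom)

section FixedMode

variable {n : ℕ} {p m : Type*} [Fintype p] [Fintype m] {Ebar Abar : Matrix (Fin n) (Fin n) Pat}
  {E A : Matrix (Fin n) (Fin n) ℝ} {lam : ℂ}

theorem isSSSFM_of_rank_fromCols_ne {Bbar : Matrix (Fin n) p Pat} (Cbar : Matrix m (Fin n) Pat)
    (Kbar : Matrix p m Pat) {B : Matrix (Fin n) p ℝ} (hE : IsRealization Ebar E)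
    (hA : IsRealization Abar A) (hreg : RegularPencil E A) (hB : IsRealization Bbar B)
    (hrank : (fromCols (toC A - lam • toC E) (toC B)).rank ≠ n) :
    IsSSSFM Ebar Abar Bbar Cbar Kbar lam := by
  obtain ⟨v, hv, hAE, hB0⟩ :=
    exists_vecMul_fromCols_eq_zero_of_rank_ne _ _ (by rwa [Fintype.card_fin])
  obtain ⟨C, hC⟩ := exists_isRealization (F := ℝ) Cbar
  refine ⟨E, A, B, C, hE, hA, hreg, hB, hC, fun K _ => ?_⟩
  have hloop : v ᵥ* (lam • toC E - toC A - toC (B * K * C)) = 0 := by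
    rw [Matrix.mul_assoc, toC_mul]
    exact vecMul_smul_sub_sub_mul_eq_zero hAE hB0 _
  simpa only [Fintype.card_fin] using
    (rank_lt_card_height_iff_exists_vecMul_eq_zero _).mpr ⟨v, hv, hloop⟩

theorem isSSSFM_of_rank_fromRows_ne (Bbar : Matrix (Fin n) p Pat) {Cbar : Matrix m (Fin n) Pat}
    (Kbar : Matrix p m Pat) {C : Matrix m (Fin n) ℝ} (hE : IsRealization Ebar E)
    (hA : IsRealization Abar A) (hreg : RegularPencil E A) (hC : IsRealization Cbar C)
    (hrank : (fromRows (toC A - lam • toC E) (toC C)).rank ≠ n) :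
    IsSSSFM Ebar Abar Bbar Cbar Kbar lam := by
  obtain ⟨v, hv, hAE, hC0⟩ :=
    exists_fromRows_mulVec_eq_zero_of_rank_ne _ _ (by rwa [Fintype.card_fin])
  obtain ⟨B, hB⟩ := exists_isRealization (F := ℝ) Bbar
  refine ⟨E, A, B, C, hE, hA, hreg, hB, hC, fun K _ => ?_⟩
  have hloop : (lam • toC E - toC A - toC (B * K * C)) *ᵥ v = 0 := by
    rw [toC_mul]
    exact smul_sub_sub_mul_mulVec_eq_zero hAE hC0 _
  simpa only [Fintype.card_fin] using
    (rank_lt_card_width_iff_exists_mulVec_eq_zero _).mpr ⟨v, hv, hloop⟩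

end FixedMode

/-- if `(Ē, Ā, B̄, C̄; K̄)` has no selective strong structural fixed modes,
then `(Ē, Ā, B̄)` is SSSC and `(Ē, Ā, C̄)` is SSSO. -/
theorem no_SSSFM_implies_SSSC_and_SSSO {n : ℕ} {p m : Type*} [Fintype p] [Fintype m]
    (Ebar Abar : Matrix (Fin n) (Fin n) Pat) (Bbar : Matrix (Fin n) p Pat)
    (Cbar : Matrix m (Fin n) Pat) (Kbar : Matrix p m Pat)
    (h : ¬ HasSSSFM Ebar Abar Bbar Cbar Kbar) :
    SSSC Ebar Abar Bbar ∧ SSSO Ebar Abar Cbar :=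
  ⟨fun _ _ _ hE hA hreg hB lam => not_not.mp fun hrank =>
      h ⟨lam, isSSSFM_of_rank_fromCols_ne Cbar Kbar hE hA hreg hB hrank⟩,
    fun _ _ _ hE hA hreg hC lam => not_not.mp fun hrank =>
      h ⟨lam, isSSSFM_of_rank_fromRows_ne Bbar Kbar hE hA hreg hC hrank⟩⟩
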